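/- Red(S) is an additive subgroup of M̄ with r(Red(S)) ⊆ Red(S) for every r ∈ R and t(Red(S)) ⊆ Red(S) for every t ∈ T(S). For every a ∈ Red(S) there is a unique b ∈ Irr(S) such that for every ε ∈ Ô there exists t ∈ T(S) with t(a) stuck in b + ε; writing t^S(a) for this b, the resulting map t^S : Red(S) → Irr(S) is additive, satisfies t^S(b) = b for every b ∈ Irr(S), satisfies t^S(t(a)) = t^S(a) for all a ∈ Red(S) and t ∈ T(S), and its kernel is contained in I(S). Moreover, every continuous additive group endomorphism r of M̄ with r ∘ t = t ∘ r for all t ∈ T(S) maps Red(S) into itself and satisfies t^S(r(a)) = r(t^S(a)) for all a ∈ Red(S). -/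

import Mathlib

open Set Filter Topology Pointwise

/-- The set of all finite compositions of elements of `T1`, including the identity. -/
def TS {M : Type*} [AddCommGroup M] (T1 : Set (AddMonoid.End M)) : Set (AddMonoid.End M) :=
  ↑(Submonoid.closure T1)

/-- Smallest topologically closed additive subgroup containing `Z` and stable under `R`. -/
def Cspan {M : Type*} [AddCommGroup M] [TopologicalSpace M]
    (R : Set (AddMonoid.End M)) (Z : Set M) : Set M :=
  ⋂₀ {N : Set M | Z ⊆ N ∧ IsClosed N ∧ (∃ H : AddSubgroup M, N = ↑H) ∧
      ∀ r ∈ R, ∀ a ∈ N, r a ∈ N}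

def IrrS {M : Type*} [AddCommGroup M] (T1 : Set (AddMonoid.End M)) : Set M :=
  {a | ∀ t ∈ TS T1, t a = a}

def IS {M : Type*} [AddCommGroup M] [TopologicalSpace M]
    (T1 : Set (AddMonoid.End M)) : Set M :=
  closure (AddSubgroup.closure {x : M | ∃ a : M, ∃ t ∈ TS T1, x = a - t a} : Set M)

def Stuck {M : Type*} [AddCommGroup M] (T1 : Set (AddMonoid.End M)) (N : Set M) (a : M) :
    Prop :=
  ∀ t ∈ TS T1, t a ∈ N

def PerE {M : Type*} [AddCommGroup M] (T1 : Set (AddMonoid.End M)) (ε : Set M) : Set M :=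
  {a | ∀ t1 ∈ TS T1, ∃ t2 ∈ TS T1, ∃ b ∈ IrrS T1,
    Stuck T1 {x | x - b ∈ ε} (t2 (t1 a))}

def Per {M : Type*} [AddCommGroup M] (T1 : Set (AddMonoid.End M))
    (B : ℕ → AddSubgroup M) : Set M :=
  ⋂ n, PerE T1 (B n)

def UniqE {M : Type*} [AddCommGroup M] (T1 : Set (AddMonoid.End M)) (ε : Set M) : Set M :=
  {a | ∀ t1 ∈ TS T1, ∀ t2 ∈ TS T1, ∀ b1 ∈ IrrS T1, ∀ b2 ∈ IrrS T1,
    Stuck T1 {x | x - b1 ∈ ε} (t1 a) → Stuck T1 {x | x - b2 ∈ ε} (t2 a) → b1 - b2 ∈ ε}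

def RedE {M : Type*} [AddCommGroup M] (T1 : Set (AddMonoid.End M))
    (B : ℕ → AddSubgroup M) (ε : Set M) : Set M :=
  Per T1 B ∩ UniqE T1 ε

def Red {M : Type*} [AddCommGroup M] (T1 : Set (AddMonoid.End M))
    (B : ℕ → AddSubgroup M) : Set M :=
  ⋂ n, RedE T1 B (B n)

def Equicont {M : Type*} [AddCommGroup M] (T1 : Set (AddMonoid.End M))
    (B : ℕ → AddSubgroup M) : Prop :=
  ∀ n : ℕ, ∃ m : ℕ, ∀ t ∈ TS T1, ∀ a ∈ B m, t a ∈ B n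

def DSM {M : Type*} [AddCommGroup M] [TopologicalSpace M]
    (R : Set (AddMonoid.End M)) (Y : Set M) (P : M → M → Prop) (μ : M) : Set M :=
  Cspan R {ν | ν ∈ Y ∧ P ν μ}

def Compatible {M : Type*} [AddCommGroup M] [TopologicalSpace M]
    (R : Set (AddMonoid.End M)) (Y : Set M) (P : M → M → Prop)
    (t : AddMonoid.End M) : Prop :=
  ∀ μ ∈ Y, t μ = μ ∨ t μ ∈ DSM R Y P μ

def DIS {M : Type*} [AddCommGroup M] [TopologicalSpace M]
    (R : Set (AddMonoid.End M)) (Y : Set M) (P : M → M → Prop)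
    (T1 : Set (AddMonoid.End M)) (μ : M) : Set M :=
  Cspan R {x | ∃ ν ∈ Y, P ν μ ∧ ∃ t ∈ T1, x = ν - t ν}

def TDCC {M : Type*} [AddCommGroup M] [TopologicalSpace M]
    (Y : Set M) (P : M → M → Prop) : Prop :=
  ∀ μ : ℕ → M, (∀ n, μ n ∈ Y) → (∀ n, P (μ (n + 1)) (μ n)) →
    Filter.Tendsto μ Filter.atTop (nhds 0)


/-!
An element `a ∈ Red(S)` persistently reduces to a single irreducible `b`: at every precision
`B n` and after every `t₁ ∈ T(S)`, some further `t₂ ∈ T(S)` makes `t₂ (t₁ a)` stuck in `b + B n`.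
Such a `b` is the limit of the `B n`-reducts of `a`, which form a Cauchy sequence by unique
reducibility, so it exists by completeness. Conversely, persistent reduction to some `b` implies
`a ∈ Red(S)` and forces `b = t^S(a)`. Persistent reduction is visibly compatible with sums,
negation, elements of `T(S)` and continuous endomorphisms commuting with `T(S)`; this yields every
closure property of `Red(S)` and every identity satisfied by `t^S`. Finally, if `t^S(a) = 0` then
`tₙ a → 0` for suitable `tₙ ∈ T(S)`, so `a = lim (a - tₙ a) ∈ I(S)`.
-/

section NormalForm

variable {M : Type*} [AddCommGroup M] {T1 : Set (AddMonoid.End M)}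

theorem one_mem_TS : (1 : AddMonoid.End M) ∈ TS T1 :=
  Submonoid.one_mem _

theorem mul_mem_TS {s t : AddMonoid.End M} (hs : s ∈ TS T1) (ht : t ∈ TS T1) :
    s * t ∈ TS T1 :=
  Submonoid.mul_mem _ hs ht

theorem continuous_of_mem_TS [TopologicalSpace M] (hT1 : ∀ t ∈ T1, Continuous t)
    {t : AddMonoid.End M} (ht : t ∈ TS T1) : Continuous t := by
  induction ht using Submonoid.closure_induction with
  | mem t ht => exact hT1 t ht
  | one => exact continuous_id
  | mul s t _ _ hs ht => exact hs.comp ht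

theorem comm_of_mem_TS {r : AddMonoid.End M} (hr : ∀ t ∈ T1, ∀ x, r (t x) = t (r x))
    {t : AddMonoid.End M} (ht : t ∈ TS T1) (x : M) : r (t x) = t (r x) := by
  induction ht using Submonoid.closure_induction generalizing x with
  | mem t ht => exact hr t ht x
  | one => rfl
  | mul s t _ _ hs ht => exact (hs _).trans (congrArg s (ht x))

theorem zero_mem_IrrS : (0 : M) ∈ IrrS T1 := fun t _ => map_zero t

theorem add_mem_IrrS {b c : M} (hb : b ∈ IrrS T1) (hc : c ∈ IrrS T1) : b + c ∈ IrrS T1 :=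
  fun t ht => by rw [map_add, hb t ht, hc t ht]

theorem neg_mem_IrrS {b : M} (hb : b ∈ IrrS T1) : -b ∈ IrrS T1 :=
  fun t ht => by rw [map_neg, hb t ht]

theorem map_mem_IrrS {r : AddMonoid.End M} (hr : ∀ t ∈ TS T1, ∀ x, r (t x) = t (r x))
    {b : M} (hb : b ∈ IrrS T1) : r b ∈ IrrS T1 :=
  fun t ht => by rw [← hr t ht, hb t ht]

theorem isClosed_IrrS [TopologicalSpace M] [T2Space M] (hT1 : ∀ t ∈ T1, Continuous t) :
    IsClosed (IrrS T1) := by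
  simp only [IrrS, ofPred_forall]
  exact isClosed_biInter fun t ht => isClosed_eq (continuous_of_mem_TS hT1 ht) continuous_id

abbrev StuckNear (T1 : Set (AddMonoid.End M)) (G : AddSubgroup M) (b y : M) : Prop :=
  Stuck T1 {x | x - b ∈ (G : Set M)} y

namespace StuckNear

variable {G : AddSubgroup M} {b c y y' : M}

theorem apply (h : StuckNear T1 G b y) {s : AddMonoid.End M} (hs : s ∈ TS T1) :
    StuckNear T1 G b (s y) :=
  fun t ht => h (t * s) (mul_mem_TS ht hs)

theorem sub_mem (h : StuckNear T1 G b y) : y - b ∈ G :=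
  h 1 one_mem_TS

theorem sub_mem_of_stuckNear (hb : StuckNear T1 G b y) (hc : StuckNear T1 G c y) :
    b - c ∈ G := by
  simpa using G.sub_mem hc.sub_mem hb.sub_mem

theorem congr (h : StuckNear T1 G b y) (hbc : b - c ∈ G) : StuckNear T1 G c y :=
  fun t ht => by simpa using G.add_mem (h t ht) hbc

theorem mono {H : AddSubgroup M} (h : StuckNear T1 G b y) (hGH : G ≤ H) :
    StuckNear T1 H b y :=
  fun t ht => hGH (h t ht)

theorem add (h : StuckNear T1 G b y) (h' : StuckNear T1 G c y') :
    StuckNear T1 G (b + c) (y + y') :=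
  fun t ht => by simpa [add_sub_add_comm] using G.add_mem (h t ht) (h' t ht)

end StuckNear

theorem stuckNear_self {G : AddSubgroup M} {b : M} (hb : b ∈ IrrS T1) : StuckNear T1 G b b :=
  fun t ht => by simp [hb t ht]

variable {B : ℕ → AddSubgroup M} {a b : M}

theorem perE_of_mem_Red (ha : a ∈ Red T1 B) (n : ℕ) {t₁ : AddMonoid.End M} (ht₁ : t₁ ∈ TS T1) :
    ∃ t₂ ∈ TS T1, ∃ c ∈ IrrS T1, StuckNear T1 (B n) c (t₂ (t₁ a)) :=
  mem_iInter.1 (mem_iInter.1 ha n).1 n t₁ ht₁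

theorem uniqE_of_mem_Red (ha : a ∈ Red T1 B) (n : ℕ) {t₁ t₂ : AddMonoid.End M}
    (ht₁ : t₁ ∈ TS T1) (ht₂ : t₂ ∈ TS T1) {b₁ b₂ : M} (hb₁ : b₁ ∈ IrrS T1) (hb₂ : b₂ ∈ IrrS T1)
    (hs₁ : StuckNear T1 (B n) b₁ (t₁ a)) (hs₂ : StuckNear T1 (B n) b₂ (t₂ a)) :
    b₁ - b₂ ∈ B n :=
  (mem_iInter.1 ha n).2 t₁ ht₁ t₂ ht₂ b₁ hb₁ b₂ hb₂ hs₁ hs₂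

def PersistentlyReducesTo (T1 : Set (AddMonoid.End M)) (B : ℕ → AddSubgroup M) (a b : M) :
    Prop :=
  b ∈ IrrS T1 ∧ ∀ n, ∀ t₁ ∈ TS T1, ∃ t₂ ∈ TS T1, StuckNear T1 (B n) b (t₂ (t₁ a))

def IsNormalForm (T1 : Set (AddMonoid.End M)) (B : ℕ → AddSubgroup M) (a b : M) : Prop :=
  b ∈ IrrS T1 ∧ ∀ n, ∃ t ∈ TS T1, StuckNear T1 (B n) b (t a)

theorem persistentlyReducesTo_self (hb : b ∈ IrrS T1) : PersistentlyReducesTo T1 B b b :=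
  ⟨hb, fun _ t₁ ht₁ => ⟨1, one_mem_TS, by rw [hb t₁ ht₁]; exact stuckNear_self hb⟩⟩

namespace PersistentlyReducesTo

variable {a' b' : M}

theorem isNormalForm (h : PersistentlyReducesTo T1 B a b) : IsNormalForm T1 B a b :=
  ⟨h.1, fun n => h.2 n 1 one_mem_TS⟩

theorem mem_Red (h : PersistentlyReducesTo T1 B a b) : a ∈ Red T1 B := by
  have hper : a ∈ Per T1 B := mem_iInter.2 fun n t₁ ht₁ =>
    let ⟨t₂, ht₂, hs⟩ := h.2 n t₁ ht₁
    ⟨t₂, ht₂, b, h.1, hs⟩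
  refine mem_iInter.2 fun n => ⟨hper, fun t₁ ht₁ t₂ ht₂ b₁ _ b₂ _ hs₁ hs₂ => ?_⟩
  -- every `B n`-reduct of `a` is close to `b`, since it can be reduced further towards `b`
  have near : ∀ {t c}, t ∈ TS T1 → StuckNear T1 (B n) c (t a) → c - b ∈ B n := fun ht hs => by
    obtain ⟨s, hs', hsb⟩ := h.2 n _ ht
    exact (hs.apply hs').sub_mem_of_stuckNear hsb
  simpa using (B n).sub_mem (near ht₁ hs₁) (near ht₂ hs₂)

theorem add (h : PersistentlyReducesTo T1 B a b) (h' : PersistentlyReducesTo T1 B a' b') :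
    PersistentlyReducesTo T1 B (a + a') (b + b') :=
  ⟨add_mem_IrrS h.1 h'.1, fun n t₁ ht₁ => by
    obtain ⟨t₂, ht₂, hs⟩ := h.2 n t₁ ht₁
    obtain ⟨t₃, ht₃, hs'⟩ := h'.2 n (t₂ * t₁) (mul_mem_TS ht₂ ht₁)
    refine ⟨t₃ * t₂, mul_mem_TS ht₃ ht₂, ?_⟩
    simpa using (hs.apply ht₃).add hs'⟩

theorem neg (h : PersistentlyReducesTo T1 B a b) : PersistentlyReducesTo T1 B (-a) (-b) :=
  ⟨neg_mem_IrrS h.1, fun n t₁ ht₁ => by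
    obtain ⟨t₂, ht₂, hs⟩ := h.2 n t₁ ht₁
    exact ⟨t₂, ht₂, fun s hs' => by simpa [neg_add_eq_sub] using (B n).neg_mem (hs s hs')⟩⟩

theorem apply (h : PersistentlyReducesTo T1 B a b) {t : AddMonoid.End M} (ht : t ∈ TS T1) :
    PersistentlyReducesTo T1 B (t a) b :=
  ⟨h.1, fun n t₁ ht₁ => h.2 n (t₁ * t) (mul_mem_TS ht₁ ht)⟩

theorem map {r : AddMonoid.End M} (hcomm : ∀ t ∈ TS T1, ∀ x, r (t x) = t (r x))
    (hr : ∀ n, ∃ m, ∀ x ∈ B m, r x ∈ B n) (h : PersistentlyReducesTo T1 B a b) :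
    PersistentlyReducesTo T1 B (r a) (r b) :=
  ⟨map_mem_IrrS hcomm h.1, fun n t₁ ht₁ => by
    obtain ⟨m, hm⟩ := hr n
    obtain ⟨t₂, ht₂, hs⟩ := h.2 m t₁ ht₁
    refine ⟨t₂, ht₂, fun s hs' => ?_⟩
    have := hm _ (hs s hs')
    rwa [map_sub, hcomm s hs', hcomm t₂ ht₂, hcomm t₁ ht₁] at this⟩

end PersistentlyReducesTo

theorem IsNormalForm.persistentlyReducesTo (ha : a ∈ Red T1 B) (h : IsNormalForm T1 B a b) :
    PersistentlyReducesTo T1 B a b :=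
  ⟨h.1, fun n t₁ ht₁ => by
    obtain ⟨t₂, ht₂, c, hc, hs⟩ := perE_of_mem_Red ha n ht₁
    obtain ⟨t, ht, hb⟩ := h.2 n
    exact ⟨t₂, ht₂, hs.congr (uniqE_of_mem_Red ha n (mul_mem_TS ht₂ ht₁) ht hc h.1 hs hb)⟩⟩

theorem IsNormalForm.unique (hBsep : ⋂ n, (B n : Set M) = {0}) (ha : a ∈ Red T1 B) {b₁ b₂ : M}
    (h₁ : IsNormalForm T1 B a b₁) (h₂ : IsNormalForm T1 B a b₂) : b₁ = b₂ := by
  have : b₁ - b₂ ∈ ⋂ n, (B n : Set M) := mem_iInter.2 fun n => by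
    obtain ⟨t₁, ht₁, hs₁⟩ := h₁.2 n
    obtain ⟨t₂, ht₂, hs₂⟩ := h₂.2 n
    exact uniqE_of_mem_Red ha n ht₁ ht₂ h₁.1 h₂.1 hs₁ hs₂
  rwa [hBsep, mem_singleton_iff, sub_eq_zero] at this

theorem exists_forall_mem_map_mem [TopologicalSpace M]
    (hBbasis : (𝓝 (0 : M)).HasBasis (fun _ : ℕ => True) (fun n => (B n : Set M)))
    {r : AddMonoid.End M} (hr : Continuous r) (n : ℕ) : ∃ m, ∀ x ∈ B m, r x ∈ B n := by
  have : Tendsto r (𝓝 0) (𝓝 0) := by simpa using hr.tendsto 0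
  obtain ⟨m, -, hm⟩ := (hBbasis.tendsto_iff hBbasis).1 this n trivial
  exact ⟨m, hm⟩

theorem cauchySeq_of_sub_mem [UniformSpace M] [IsUniformAddGroup M]
    (hBbasis : (𝓝 (0 : M)).HasBasis (fun _ : ℕ => True) (fun n => (B n : Set M)))
    {c : ℕ → M} (hc : ∀ {n m}, n ≤ m → c n - c m ∈ B n) : CauchySeq c := by
  have hU : (uniformity M).HasBasis (fun _ : ℕ => True)
      (fun n => {p : M × M | p.2 - p.1 ∈ B n}) := by
    rw [uniformity_eq_comap_nhds_zero M]
    exact hBbasis.comap _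
  exact hU.cauchySeq_iff'.2 fun n _ => ⟨n, fun m hm => hc hm⟩

theorem sub_mem_of_tendsto [TopologicalSpace M] [IsTopologicalAddGroup M]
    (hBbasis : (𝓝 (0 : M)).HasBasis (fun _ : ℕ => True) (fun n => (B n : Set M)))
    {c : ℕ → M} (hc : ∀ {n m}, n ≤ m → c n - c m ∈ B n) {b : M}
    (hb : Tendsto c atTop (𝓝 b)) (n : ℕ) : c n - b ∈ B n := by
  have hsmall : ∀ᶠ m in atTop, c m - b ∈ B n :=
    hBbasis.tendsto_right_iff.1 (tendsto_sub_nhds_zero_iff.2 hb) n trivial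
  obtain ⟨m, hm, hmb⟩ := ((eventually_ge_atTop n).and hsmall).exists
  simpa using (B n).add_mem (hc hm) hmb

theorem exists_isNormalForm [UniformSpace M] [IsUniformAddGroup M] [CompleteSpace M] [T2Space M]
    (hBbasis : (𝓝 (0 : M)).HasBasis (fun _ : ℕ => True) (fun n => (B n : Set M)))
    (hB : Antitone B) (hT1 : ∀ t ∈ T1, Continuous t) (ha : a ∈ Red T1 B) :
    ∃ b, IsNormalForm T1 B a b := by
  choose t ht c hc hst using fun n => perE_of_mem_Red ha n (one_mem_TS (T1 := T1))
  have hdiff : ∀ {n m}, n ≤ m → c n - c m ∈ B n := fun {n m} hnm =>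
    uniqE_of_mem_Red ha n (ht n) (ht m) (hc n) (hc m) (hst n) ((hst m).mono (hB hnm))
  obtain ⟨b, hb⟩ := cauchySeq_tendsto_of_complete (cauchySeq_of_sub_mem hBbasis hdiff)
  exact ⟨b, (isClosed_IrrS hT1).mem_of_tendsto hb (.of_forall hc), fun n =>
    ⟨t n, ht n, (hst n).congr (sub_mem_of_tendsto hBbasis hdiff hb n)⟩⟩

theorem mem_IS_of_isNormalForm_zero [TopologicalSpace M] [IsTopologicalAddGroup M]
    (hBbasis : (𝓝 (0 : M)).HasBasis (fun _ : ℕ => True) (fun n => (B n : Set M)))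
    (hB : Antitone B) (h : IsNormalForm T1 B a 0) : a ∈ IS T1 := by
  choose t ht hst using h.2
  have hlim : Tendsto (fun n => t n a) atTop (𝓝 0) :=
    hBbasis.tendsto_right_iff.2 fun n _ =>
      (eventually_ge_atTop n).mono fun m hm => hB hm (by simpa using (hst m).sub_mem)
  exact mem_closure_of_tendsto (by simpa using hlim.const_sub a)
    (.of_forall fun n => AddSubgroup.subset_closure ⟨a, t n, ht n, rfl⟩)

end NormalForm

theorem Red_module_and_normal_form_map_general
    {M : Type*} [AddCommGroup M] [UniformSpace M] [IsUniformAddGroup M]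
    [CompleteSpace M] [T2Space M]
    (B : ℕ → AddSubgroup M)
    (hBanti : ∀ n, (B (n + 1) : Set M) ⊆ (B n : Set M))
    (hBbasis : (nhds (0 : M)).HasBasis (fun _ : ℕ => True) (fun n => (B n : Set M)))
    (hBsep : ⋂ n, (B n : Set M) = {0})
    (R : Set (AddMonoid.End M))
    (hRcont : ∀ r ∈ R, Continuous r)
    (T1 : Set (AddMonoid.End M))
    (hT1cont : ∀ t ∈ T1, Continuous t)
    (hT1comm : ∀ t ∈ T1, ∀ r ∈ R, ∀ a : M, t (r a) = r (t a)) :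
    (∃ H : AddSubgroup M, (H : Set M) = Red T1 B) ∧
    (∀ r ∈ R, ∀ a ∈ Red T1 B, r a ∈ Red T1 B) ∧
    (∀ t ∈ TS T1, ∀ a ∈ Red T1 B, t a ∈ Red T1 B) ∧
    (∀ a ∈ Red T1 B, ∃! b : M, b ∈ IrrS T1 ∧
        ∀ n : ℕ, ∃ t ∈ TS T1, Stuck T1 {x | x - b ∈ (B n : Set M)} (t a)) ∧
    (∀ tS : M → M,
      (∀ a ∈ Red T1 B, tS a ∈ IrrS T1 ∧
        ∀ n : ℕ, ∃ t ∈ TS T1, Stuck T1 {x | x - tS a ∈ (B n : Set M)} (t a)) →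
      (∀ a ∈ Red T1 B, ∀ b ∈ Red T1 B, tS (a + b) = tS a + tS b) ∧
      (IrrS T1 ⊆ Red T1 B) ∧
      (∀ b ∈ IrrS T1, tS b = b) ∧
      (∀ a ∈ Red T1 B, ∀ t ∈ TS T1, tS (t a) = tS a) ∧
      (∀ a ∈ Red T1 B, tS a = 0 → a ∈ IS T1) ∧
      (∀ r : AddMonoid.End M, Continuous r →
        (∀ t ∈ TS T1, ∀ x : M, r (t x) = t (r x)) →
        (∀ a ∈ Red T1 B, r a ∈ Red T1 B) ∧
        (∀ a ∈ Red T1 B, tS (r a) = r (tS a)))) := by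
  have hB : Antitone B := antitone_nat_of_succ_le fun n => SetLike.coe_subset_coe.1 (hBanti n)
  have hNF : ∀ a ∈ Red T1 B, ∃ b, IsNormalForm T1 B a b := fun a ha =>
    exists_isNormalForm hBbasis hB hT1cont ha
  have hRed : ∀ {a}, a ∈ Red T1 B → ∃ b, PersistentlyReducesTo T1 B a b := fun ha =>
    (hNF _ ha).imp fun _ hb => hb.persistentlyReducesTo ha
  have hmap : ∀ r : AddMonoid.End M, Continuous r → (∀ t ∈ TS T1, ∀ x, r (t x) = t (r x)) →
      ∀ a ∈ Red T1 B, r a ∈ Red T1 B := fun r hr hcomm a ha =>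
    let ⟨_, hb⟩ := hRed ha
    (hb.map hcomm (exists_forall_mem_map_mem hBbasis hr)).mem_Red
  refine ⟨⟨{ carrier := Red T1 B
             zero_mem' := (persistentlyReducesTo_self zero_mem_IrrS).mem_Red
             add_mem' := fun ha ha' =>
               let ⟨_, hb⟩ := hRed ha; let ⟨_, hb'⟩ := hRed ha'; (hb.add hb').mem_Red
             neg_mem' := fun ha => let ⟨_, hb⟩ := hRed ha; hb.neg.mem_Red }, rfl⟩,
    fun r hr => hmap r (hRcont r hr) fun t ht =>
      comm_of_mem_TS (fun t' ht' x => (hT1comm t' ht' r hr x).symm) ht,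
    fun t ht a ha => let ⟨_, hb⟩ := hRed ha; (hb.apply ht).mem_Red,
    fun a ha =>
      let ⟨b, hb⟩ := hNF a ha
      ⟨b, hb, fun _ hb' => IsNormalForm.unique hBsep ha hb' hb⟩,
    fun tS htS => ?_⟩
  have reduces : ∀ {a}, a ∈ Red T1 B → PersistentlyReducesTo T1 B a (tS a) := fun ha =>
    IsNormalForm.persistentlyReducesTo ha (htS _ ha)
  have eq_of_reduces : ∀ {a b}, PersistentlyReducesTo T1 B a b → tS a = b := fun h =>
    IsNormalForm.unique hBsep h.mem_Red (htS _ h.mem_Red) h.isNormalForm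
  exact ⟨fun a ha a' ha' => eq_of_reduces ((reduces ha).add (reduces ha')),
    fun b hb => (persistentlyReducesTo_self hb).mem_Red,
    fun b hb => eq_of_reduces (persistentlyReducesTo_self hb),
    fun a ha t ht => eq_of_reduces ((reduces ha).apply ht),
    fun a ha h0 => mem_IS_of_isNormalForm_zero hBbasis hB (h0 ▸ htS a ha),
    fun r hr hcomm => ⟨hmap r hr hcomm, fun a ha =>
      eq_of_reduces ((reduces ha).map hcomm (exists_forall_mem_map_mem hBbasis hr))⟩⟩

theorem Red_module_and_normal_form_map
    {M : Type*} [AddCommGroup M] [UniformSpace M] [IsUniformAddGroup M]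
    [CompleteSpace M] [T2Space M]
    (B : ℕ → AddSubgroup M)
    (hBopen : ∀ n, IsOpen (B n : Set M))
    (hBanti : ∀ n, (B (n + 1) : Set M) ⊆ (B n : Set M))
    (hBbasis : (nhds (0 : M)).HasBasis (fun _ : ℕ => True) (fun n => (B n : Set M)))
    (hBsep : ⋂ n, (B n : Set M) = {0})
    (R : Set (AddMonoid.End M))
    (hRcont : ∀ r ∈ R, Continuous r)
    (hRsmall : ∀ r ∈ R, ∀ n : ℕ, ∀ a ∈ B n, r a ∈ B n)
    (T1 : Set (AddMonoid.End M))
    (hT1cont : ∀ t ∈ T1, Continuous t)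
    (hT1comm : ∀ t ∈ T1, ∀ r ∈ R, ∀ a : M, t (r a) = r (t a)) :
    (∃ H : AddSubgroup M, (H : Set M) = Red T1 B) ∧
    (∀ r ∈ R, ∀ a ∈ Red T1 B, r a ∈ Red T1 B) ∧
    (∀ t ∈ TS T1, ∀ a ∈ Red T1 B, t a ∈ Red T1 B) ∧
    (∀ a ∈ Red T1 B, ∃! b : M, b ∈ IrrS T1 ∧
        ∀ n : ℕ, ∃ t ∈ TS T1, Stuck T1 {x | x - b ∈ (B n : Set M)} (t a)) ∧
    (∀ tS : M → M,
      (∀ a ∈ Red T1 B, tS a ∈ IrrS T1 ∧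
        ∀ n : ℕ, ∃ t ∈ TS T1, Stuck T1 {x | x - tS a ∈ (B n : Set M)} (t a)) →
      (∀ a ∈ Red T1 B, ∀ b ∈ Red T1 B, tS (a + b) = tS a + tS b) ∧
      (IrrS T1 ⊆ Red T1 B) ∧
      (∀ b ∈ IrrS T1, tS b = b) ∧
      (∀ a ∈ Red T1 B, ∀ t ∈ TS T1, tS (t a) = tS a) ∧
      (∀ a ∈ Red T1 B, tS a = 0 → a ∈ IS T1) ∧
      (∀ r : AddMonoid.End M, Continuous r →
        (∀ t ∈ TS T1, ∀ x : M, r (t x) = t (r x)) →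
        (∀ a ∈ Red T1 B, r a ∈ Red T1 B) ∧
        (∀ a ∈ Red T1 B, tS (r a) = r (tS a)))) :=
  Red_module_and_normal_form_map_general B hBanti hBbasis hBsep R hRcont T1 hT1cont hT1comm
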